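/- arXiv:1010.2652 — 4 statements merged into one kernel-verified Lean document; each statement's English description precedes it below -/
import Mathlib

section
/- Let S₁, S₂, p be homogeneous polynomials in n variables over a field K, of degrees d₁, d₂, s respectively. Let S₀ = gcd(S₁, S₂) have degree d₀, and assume 0 < s < d₁ + d₂ − d₀. Then there exists at most one pair (u, v) of homogeneous polynomials of degrees s − d₁ and s − d₂ respectively such that S₁·u + S₂·v = p. -/
open MvPolynomial

lemma aux_comp_mul {n : ℕ} {K : Type*} [Field K] {F : MvPolynomial (Fin n) K} {a : ℕ}
    (hF : F.IsHomogeneous a) (T : MvPolynomial (Fin n) K) (i : ℕ) :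
    homogeneousComponent (a + i) (F * T) = F * homogeneousComponent i T := by
  by_cases hi : i ≤ T.totalDegree
  · conv_lhs => rw [← sum_homogeneousComponent T]
    rw [Finset.mul_sum, map_sum]
    have key : ∀ j ∈ Finset.range (T.totalDegree + 1),
        homogeneousComponent (a + i) (F * homogeneousComponent j T)
          = if j = i then F * homogeneousComponent i T else 0 := by
      intro j _
      have hmem : F * homogeneousComponent j T ∈ homogeneousSubmodule (Fin n) K (a + j) :=
        (mem_homogeneousSubmodule _ _).2 (hF.mul (homogeneousComponent_isHomogeneous j T))
      rw [homogeneousComponent_of_mem hmem]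
      by_cases hji : j = i
      · subst hji; simp
      · rw [if_neg (by omega : ¬ a + i = a + j), if_neg hji]
    rw [Finset.sum_congr rfl key, Finset.sum_ite_eq' _ i]
    simp [Finset.mem_range, Nat.lt_succ_of_le hi]
  · push_neg at hi
    rw [homogeneousComponent_eq_zero _ _ hi, mul_zero, homogeneousComponent_eq_zero]
    calc (F * T).totalDegree ≤ F.totalDegree + T.totalDegree := totalDegree_mul F T
    _ ≤ a + T.totalDegree := by
        gcongr; exact hF.totalDegree_le
    _ < a + i := by omega

/-- If `F` is nonzero homogeneous of degree `a` and `F * T` is homogeneous of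
degree `d`, with `T ≠ 0`, then `a ≤ d` and `T` is homogeneous of degree `d - a`. -/
lemma aux_cofactor {n : ℕ} {K : Type*} [Field K] {F T : MvPolynomial (Fin n) K} {a d : ℕ}
    (hF : F.IsHomogeneous a) (hF0 : F ≠ 0) (hFT : (F * T).IsHomogeneous d) (hT : T ≠ 0) :
    a ≤ d ∧ T.IsHomogeneous (d - a) := by
  have hcomp : ∀ i, a + i ≠ d → homogeneousComponent i T = 0 := by
    intro i hi
    have h1 := aux_comp_mul hF T i
    have h2 : homogeneousComponent (a + i) (F * T) = 0 := by
      rw [homogeneousComponent_of_mem ((mem_homogeneousSubmodule _ _).2 hFT)]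
      simp [hi]
    rw [h2] at h1
    rcases mul_eq_zero.1 h1.symm with h | h
    · exact absurd h hF0
    · exact h
  have had : a ≤ d := by
    by_contra h
    push_neg at h
    apply hT
    rw [← sum_homogeneousComponent T]
    exact Finset.sum_eq_zero fun i _ => hcomp i (by omega)
  refine ⟨had, ?_⟩
  rw [← sum_homogeneousComponent T]
  apply IsHomogeneous.sum
  intro i _
  by_cases hi : a + i = d
  · have : i = d - a := by omega
    subst this
    exact homogeneousComponent_isHomogeneous _ T
  · rw [hcomp i hi]
    exact isHomogeneous_zero _ _ _

/-- Proposition 2: uniqueness of (u,v) with S₁u + S₂v = p when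
0 < s < d₁ + d₂ − d₀, where S₀ = gcd(S₁,S₂) is homogeneous of degree d₀. -/
theorem stmt_1 {n : ℕ} {K : Type*} [Field K]
    (S0 S1 S2 p u v u' v' : MvPolynomial (Fin n) K) (d0 d1 d2 s : ℕ)
    (hS0 : S0.IsHomogeneous d0) (hS1 : S1.IsHomogeneous d1) (hS2 : S2.IsHomogeneous d2)
    (hS0ne : S0 ≠ 0) (hS1ne : S1 ≠ 0) (hS2ne : S2 ≠ 0)
    (hdvd1 : S0 ∣ S1) (hdvd2 : S0 ∣ S2)
    (hgcd : ∀ q : MvPolynomial (Fin n) K, q ∣ S1 → q ∣ S2 → q ∣ S0)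
    (hp : p.IsHomogeneous s) (hs0 : 0 < s) (hs : s + d0 < d1 + d2)
    (hu : if d1 ≤ s then u.IsHomogeneous (s - d1) else u = 0)
    (hv : if d2 ≤ s then v.IsHomogeneous (s - d2) else v = 0)
    (hu' : if d1 ≤ s then u'.IsHomogeneous (s - d1) else u' = 0)
    (hv' : if d2 ≤ s then v'.IsHomogeneous (s - d2) else v' = 0)
    (heq : S1 * u + S2 * v = p) (heq' : S1 * u' + S2 * v' = p) :
    u = u' ∧ v = v' := by
  -- reduce to showing u = u'
  suffices huu : u = u' by
    refine ⟨huu, ?_⟩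
    subst huu
    have : S2 * v = S2 * v' := by
      have := heq.trans heq'.symm
      linear_combination this
    exact mul_left_cancel₀ hS2ne this
  by_cases hd1 : d1 ≤ s
  swap
  · rw [if_neg hd1] at hu hu'
    rw [hu, hu']
  rw [if_pos hd1] at hu hu'
  by_contra hne
  -- the difference a = u - u' is nonzero homogeneous of degree s - d1
  have ha : (u - u').IsHomogeneous (s - d1) := hu.sub hu'
  have hane : u - u' ≠ 0 := sub_ne_zero_of_ne hne
  obtain ⟨T1, hT1⟩ := hdvd1
  obtain ⟨T2, hT2⟩ := hdvd2
  have hT2ne : T2 ≠ 0 := by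
    rintro rfl
    exact hS2ne (by rw [hT2, mul_zero])
  -- T1 and T2 are relatively prime
  have hrel : IsRelPrime T2 T1 := by
    intro q hq2 hq1
    have h1 : S0 * q ∣ S1 := hT1 ▸ mul_dvd_mul_left S0 hq1
    have h2 : S0 * q ∣ S2 := hT2 ▸ mul_dvd_mul_left S0 hq2
    have h0 : S0 * q ∣ S0 * 1 := by simpa using hgcd _ h1 h2
    exact isUnit_of_dvd_one ((mul_dvd_mul_iff_left hS0ne).1 h0)
  -- key equation
  have hkey : T1 * (u - u') = T2 * (v' - v) := by
    have h : S1 * (u - u') = S2 * (v' - v) := by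
      have := heq.trans heq'.symm
      ring_nf
      linear_combination this
    rw [hT1, hT2] at h
    apply mul_left_cancel₀ hS0ne
    linear_combination h
  -- hence T2 divides u - u'
  have hdvd : T2 ∣ u - u' := by
    apply hrel.dvd_of_dvd_mul_left
    exact ⟨v' - v, hkey⟩
  -- degree considerations
  have hS2hom : (S0 * T2).IsHomogeneous d2 := hT2 ▸ hS2
  obtain ⟨hd02, hT2hom⟩ := aux_cofactor hS0 hS0ne hS2hom hT2ne
  obtain ⟨c, hc⟩ := hdvd
  have hcne : c ≠ 0 := by
    rintro rfl
    exact hane (by rw [hc, mul_zero])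
  have hprod : (T2 * c).IsHomogeneous (s - d1) := hc ▸ ha
  obtain ⟨hle, -⟩ := aux_cofactor hT2hom hT2ne hprod hcne
  omega
end

section
/- Let S₁, …, S_k be pairwise coprime homogeneous polynomials in n variables over a field K, of degrees d₁, …, d_k, and let S = S₁⋯S_k. Let P be a homogeneous polynomial of degree t with t < deg S. Then there is at most one tuple (A₁, …, A_k) of homogeneous polynomials with deg Aᵢ + deg(S/Sᵢ) = t for each i such that P = (S/S₁)·A₁ + ⋯ + (S/S_k)·A_k. -/
open MvPolynomial

/-- In a domain, a nonzero homogeneous polynomial of degree `a` dividing a nonzero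
homogeneous polynomial of degree `m` forces `a ≤ m`. -/
lemma stmt_2_aux {σ : Type*} {R : Type*} [CommRing R] [IsDomain R]
    {p q : MvPolynomial σ R} {a m : ℕ}
    (hp : p.IsHomogeneous a) (hq : q ≠ 0)
    (hpq : (p * q).IsHomogeneous m) (hne : p * q ≠ 0) : a ≤ m := by
  have hp0 : p ≠ 0 := by rintro rfl; simp at hne
  -- pick a nonzero homogeneous component of q
  have : ∃ e, homogeneousComponent e q ≠ 0 := by
    by_contra h
    push_neg at h
    apply hq
    rw [← sum_homogeneousComponent (φ := q)]
    exact Finset.sum_eq_zero fun e _ => h e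
  obtain ⟨e, he⟩ := this
  have hele : e ≤ q.totalDegree := by
    by_contra h
    exact he (homogeneousComponent_eq_zero _ _ (lt_of_not_ge h))
  have hsplit : p * q = ∑ i ∈ Finset.range (q.totalDegree + 1),
      p * homogeneousComponent i q := by
    rw [← Finset.mul_sum, sum_homogeneousComponent]
  have hcomp : homogeneousComponent (a + e) (p * q) = p * homogeneousComponent e q := by
    rw [hsplit, map_sum]
    rw [Finset.sum_eq_single e]
    · exact (homogeneousComponent_of_mem
        ((hp.mul (homogeneousComponent_isHomogeneous e q)) : _)).trans (if_pos rfl)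
    · intro b _ hb
      rw [homogeneousComponent_of_mem
        ((hp.mul (homogeneousComponent_isHomogeneous b q)) : _), if_neg (by omega)]
    · intro h
      exact absurd (Finset.mem_range.mpr (by omega)) h
  have hcomp2 : homogeneousComponent (a + e) (p * q) =
      if a + e = m then p * q else 0 := homogeneousComponent_of_mem hpq
  by_cases hm : a + e = m
  · omega
  · rw [hcomp2, if_neg hm] at hcomp
    exact absurd hcomp.symm (mul_ne_zero hp0 he)

/-- Lemma (main): uniqueness of the tuple (A₁,…,A_k) with
P = Σᵢ (S/Sᵢ)·Aᵢ, for pairwise coprime homogeneous Sᵢ and t < deg S. -/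
theorem stmt_2 {n k : ℕ} {K : Type*} [Field K]
    (S : Fin k → MvPolynomial (Fin n) K) (d : Fin k → ℕ)
    (hS : ∀ i, (S i).IsHomogeneous (d i)) (hSne : ∀ i, S i ≠ 0)
    (hcop : ∀ i j, i ≠ j → ∀ q : MvPolynomial (Fin n) K, q ∣ S i → q ∣ S j → IsUnit q)
    (t : ℕ) (ht : t < ∑ i, d i)
    (P : MvPolynomial (Fin n) K) (hP : P.IsHomogeneous t)
    (A A' : Fin k → MvPolynomial (Fin n) K)
    (hA : ∀ i, if (∑ j, d j) - d i ≤ t then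
        (A i).IsHomogeneous (t - ((∑ j, d j) - d i)) else A i = 0)
    (hA' : ∀ i, if (∑ j, d j) - d i ≤ t then
        (A' i).IsHomogeneous (t - ((∑ j, d j) - d i)) else A' i = 0)
    (heq : ∑ i, (∏ j ∈ Finset.univ.erase i, S j) * A i = P)
    (heq' : ∑ i, (∏ j ∈ Finset.univ.erase i, S j) * A' i = P) :
    A = A' := by
  set B : Fin k → MvPolynomial (Fin n) K := fun i => A i - A' i with hB
  have hsum : ∑ i, (∏ j ∈ Finset.univ.erase i, S j) * B i = 0 := by
    simp only [hB, mul_sub, Finset.sum_sub_distrib, heq, heq', sub_self]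
  funext i
  rw [← sub_eq_zero]
  show B i = 0
  -- S i divides every term with index ≠ i
  have hdvd : S i ∣ (∏ j ∈ Finset.univ.erase i, S j) * B i := by
    have hsplit : (∏ j ∈ Finset.univ.erase i, S j) * B i +
        ∑ l ∈ Finset.univ.erase i, (∏ j ∈ Finset.univ.erase l, S j) * B l = 0 := by
      rw [← hsum]; exact Finset.add_sum_erase _ _ (Finset.mem_univ i)
    rw [eq_neg_of_add_eq_zero_left hsplit]
    rw [dvd_neg]
    apply Finset.dvd_sum
    intro l hl
    exact dvd_mul_of_dvd_left (Finset.dvd_prod_of_mem S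
      (Finset.mem_erase.mpr ⟨(Finset.mem_erase.mp hl).1.symm, Finset.mem_univ i⟩)) _
  have hdvdB : S i ∣ B i := by
    refine UniqueFactorizationMonoid.dvd_of_dvd_mul_right_of_no_prime_factors (hSne i)
      ?_ hdvd
    intro q hqi hqprod hq
    obtain ⟨j, hj, hqj⟩ := hq.exists_mem_finset_dvd hqprod
    exact hq.not_unit (hcop i j (Finset.mem_erase.mp hj).1.symm q hqi hqj)
  by_contra hBne
  -- degree comparison
  have hle : (∑ j, d j) - d i ≤ t := by
    by_contra h
    have h1 := hA i; have h2 := hA' i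
    rw [if_neg h] at h1 h2
    exact hBne (by simp [hB, h1, h2])
  have h1 := hA i; have h2 := hA' i
  rw [if_pos hle] at h1 h2
  have hBhom : (B i).IsHomogeneous (t - ((∑ j, d j) - d i)) := h1.sub h2
  obtain ⟨c, hc⟩ := hdvdB
  have hc0 : c ≠ 0 := by rintro rfl; rw [mul_zero] at hc; exact hBne hc
  have hdi : d i ≤ ∑ j, d j := Finset.single_le_sum (fun j _ => Nat.zero_le _) (Finset.mem_univ i)
  have : d i ≤ t - ((∑ j, d j) - d i) := by
    refine stmt_2_aux (hS i) hc0 ?_ ?_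
    · rw [← hc]; exact hBhom
    · rw [← hc]; exact hBne
  omega
end

section
/- The two Laplace invariants h = c − ab − ∂_x(a) and k = c − ab − ∂_y(b) of the operator L = D_x D_y + a D_x + b D_y + c are invariant under gauge transformation: if g ∈ K is invertible, then g⁻¹∘L∘g = D_x D_y + a'·D_x + b'·D_y + c' with a' = a + g⁻¹∂_y(g), b' = b + g⁻¹∂_x(g), and the invariants satisfy c' − a'b' − ∂_x(a') = c − ab − ∂_x(a) and c' − a'b' − ∂_y(b') = c − ab − ∂_y(b). -/
/-- Gauge invariance of the Laplace invariants: for a unit g,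
g⁻¹∘L∘g = DxDy + a'Dx + b'Dy + c' with a' = a + g⁻¹∂_y g, b' = b + g⁻¹∂ₓ g,
and the two Laplace invariants of the transformed operator equal those of L. -/
theorem stmt_9 {K A : Type*} [CommRing K] [Ring A] (ι : K →+* A) (Dx Dy : A)
    (dx dy : Derivation ℤ K K)
    (hcd : ∀ f : K, dx (dy f) = dy (dx f))
    (hx : ∀ f : K, Dx * ι f = ι f * Dx + ι (dx f))
    (hy : ∀ f : K, Dy * ι f = ι f * Dy + ι (dy f))
    (hDD : Dx * Dy = Dy * Dx)
    (a b c : K) (g : Kˣ) :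
    ∃ c' : K,
      ι ↑g⁻¹ * (Dx * Dy + ι a * Dx + ι b * Dy + ι c) * ι ↑g =
        Dx * Dy + ι (a + ↑g⁻¹ * dy ↑g) * Dx + ι (b + ↑g⁻¹ * dx ↑g) * Dy + ι c' ∧
      c' - (a + ↑g⁻¹ * dy ↑g) * (b + ↑g⁻¹ * dx ↑g) - dx (a + ↑g⁻¹ * dy ↑g) =
        c - a * b - dx a ∧
      c' - (a + ↑g⁻¹ * dy ↑g) * (b + ↑g⁻¹ * dx ↑g) - dy (b + ↑g⁻¹ * dx ↑g) =
        c - a * b - dy b := by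
  set u : K := (g : K) with hu
  set v : K := ((g⁻¹ : Kˣ) : K) with hv
  have hvu : v * u = 1 := g.inv_mul
  refine ⟨c + a * (v * dx u) + b * (v * dy u) + v * dx (dy u), ?_, ?_, ?_⟩
  · -- operator identity
    have e1 : u * (a + v * dy u) = a * u + dy u := by
      linear_combination (dy u) * hvu
    have e2 : u * (b + v * dx u) = b * u + dx u := by
      linear_combination (dx u) * hvu
    have e3 : u * (c + a * (v * dx u) + b * (v * dy u) + v * dx (dy u))
        = c * u + a * dx u + b * dy u + dx (dy u) := by
      linear_combination (a * dx u + b * dy u + dx (dy u)) * hvu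
    have hxy : Dx * Dy * ι u
        = ι u * (Dx * Dy) + (ι (dx u) * Dy + ι (dy u) * Dx + ι (dx (dy u))) := by
      rw [mul_assoc, hy u, mul_add, ← mul_assoc, hx u, hx (dy u)]
      noncomm_ring
    have key : (Dx * Dy + ι a * Dx + ι b * Dy + ι c) * ι u
        = ι u * (Dx * Dy + ι (a + v * dy u) * Dx + ι (b + v * dx u) * Dy
            + ι (c + a * (v * dx u) + b * (v * dy u) + v * dx (dy u))) := by
      calc (Dx * Dy + ι a * Dx + ι b * Dy + ι c) * ι u
          = Dx * Dy * ι u + ι a * (Dx * ι u) + ι b * (Dy * ι u) + ι c * ι u := by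
            noncomm_ring
        _ = (ι u * (Dx * Dy) + (ι (dx u) * Dy + ι (dy u) * Dx + ι (dx (dy u))))
            + ι a * (ι u * Dx + ι (dx u)) + ι b * (ι u * Dy + ι (dy u)) + ι c * ι u := by
            rw [hxy, hx u, hy u]
        _ = ι u * (Dx * Dy) + ι (a * u + dy u) * Dx + ι (b * u + dx u) * Dy
            + ι (c * u + a * dx u + b * dy u + dx (dy u)) := by
            simp only [map_add, map_mul]; noncomm_ring
        _ = ι u * (Dx * Dy) + ι (u * (a + v * dy u)) * Dx + ι (u * (b + v * dx u)) * Dy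
            + ι (u * (c + a * (v * dx u) + b * (v * dy u) + v * dx (dy u))) := by
            rw [e1, e2, e3]
        _ = ι u * (Dx * Dy + ι (a + v * dy u) * Dx + ι (b + v * dx u) * Dy
            + ι (c + a * (v * dx u) + b * (v * dy u) + v * dx (dy u))) := by
            simp only [map_mul]; noncomm_ring
    rw [mul_assoc, key, ← mul_assoc, ← map_mul, hvu, map_one, one_mul]
  · -- first invariant
    have h0x : u * dx v + v * dx u = 0 := by
      have h := dx.leibniz v u
      rw [hvu, Derivation.map_one_eq_zero, smul_eq_mul, smul_eq_mul] at h
      linear_combination -h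
    have hd : dx (a + v * dy u) = dx a + (dx v * dy u + v * dx (dy u)) := by
      rw [map_add, dx.leibniz, smul_eq_mul, smul_eq_mul]; ring
    rw [hd]
    linear_combination (-(v * dy u)) * h0x + (dy u * dx v) * hvu
  · -- second invariant
    have h0y : u * dy v + v * dy u = 0 := by
      have h := dy.leibniz v u
      rw [hvu, Derivation.map_one_eq_zero, smul_eq_mul, smul_eq_mul] at h
      linear_combination -h
    have hd : dy (b + v * dx u) = dy b + (dy v * dx u + v * dy (dx u)) := by
      rw [map_add, dy.leibniz, smul_eq_mul, smul_eq_mul]; ring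
    rw [hd, hcd u]
    linear_combination (-(v * dx u)) * h0y + (dx u * dy v) * hvu
end

section
/- Let L = D_x D_y (D_x + D_y) + a₂₀D_{xx} + a₁₁D_{xy} + a₀₂D_{yy} + a₁₀D_x + a₀₁D_y + a₀₀ be a third-order operator over a commutative differential ring K. If L = (D_x + g)∘(D_y + h)∘(D_x + D_y + f) for some g, h, f ∈ K, then necessarily h = a₂₀, g = a₀₂, and f = a₁₁ − a₀₂ − a₂₀. -/
set_option maxHeartbeats 1000000


/-- For a third-order operator with symbol XY(X+Y), a factorization of type
(X)(Y)(X+Y) forces h = a₂₀, g = a₀₂, f = a₁₁ − a₀₂ − a₂₀.  Independence of the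
monomials Dxⁱ Dyʲ (i + j ≤ 3) over K is the defining property of the operator
ring. -/
theorem stmt_12 {K A : Type*} [CommRing K] [Ring A] (ι : K →+* A) (Dx Dy : A)
    (dx dy : Derivation ℤ K K)
    (hx : ∀ f : K, Dx * ι f = ι f * Dx + ι (dx f))
    (hy : ∀ f : K, Dy * ι f = ι f * Dy + ι (dy f))
    (hDD : Dx * Dy = Dy * Dx)
    (hind : ∀ c30 c21 c12 c03 c20 c11 c02 c10 c01 c00 : K,
      ι c30 * (Dx * Dx * Dx) + ι c21 * (Dx * Dx * Dy) + ι c12 * (Dx * (Dy * Dy)) +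
        ι c03 * (Dy * Dy * Dy) + ι c20 * (Dx * Dx) + ι c11 * (Dx * Dy) +
        ι c02 * (Dy * Dy) + ι c10 * Dx + ι c01 * Dy + ι c00 = 0 →
      c30 = 0 ∧ c21 = 0 ∧ c12 = 0 ∧ c03 = 0 ∧ c20 = 0 ∧ c11 = 0 ∧ c02 = 0 ∧
        c10 = 0 ∧ c01 = 0 ∧ c00 = 0)
    (a20 a11 a02 a10 a01 a00 g h f : K)
    (hL : Dx * Dy * (Dx + Dy) + ι a20 * (Dx * Dx) + ι a11 * (Dx * Dy) +
        ι a02 * (Dy * Dy) + ι a10 * Dx + ι a01 * Dy + ι a00 =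
      (Dx + ι g) * (Dy + ι h) * (Dx + Dy + ι f)) :
    h = a20 ∧ g = a02 ∧ f = a11 - a02 - a20 := by

  have hx' : ∀ (c : K) (a : A), Dx * (ι c * a) = ι c * (Dx * a) + ι (dx c) * a := by
    intro c a
    rw [← mul_assoc, hx, add_mul, mul_assoc]
  have hy' : ∀ (c : K) (a : A), Dy * (ι c * a) = ι c * (Dy * a) + ι (dy c) * a := by
    intro c a
    rw [← mul_assoc, hy, add_mul, mul_assoc]
  have hDD'' : Dy * Dx = Dx * Dy := hDD.symm
  have hDD' : ∀ a : A, Dy * (Dx * a) = Dx * (Dy * a) := by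
    intro a
    rw [← mul_assoc, hDD'', mul_assoc]
  have key : (Dx + ι g) * (Dy + ι h) * (Dx + Dy + ι f) =
      Dx * Dx * Dy + Dx * (Dy * Dy) + ι h * (Dx * Dx) +
        (ι f + ι g + ι h) * (Dx * Dy) + ι g * (Dy * Dy) +
        (ι (dy f) + ι h * ι f + ι (dx h) + ι g * ι h) * Dx +
        (ι (dx f) + ι g * ι f + ι (dx h) + ι g * ι h) * Dy +
        (ι (dx (dy f)) + ι h * ι (dx f) + ι g * ι (dy f) +
          (ι (dx h) + ι g * ι h) * ι f) := by
    simp only [mul_add, add_mul, mul_assoc, hx', hy', hx, hy, hDD', hDD'']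
    abel
  have main : ι (0 : K) * (Dx * Dx * Dx) + ι (0 : K) * (Dx * Dx * Dy) +
      ι (0 : K) * (Dx * (Dy * Dy)) + ι (0 : K) * (Dy * Dy * Dy) +
      ι (a20 - h) * (Dx * Dx) + ι (a11 - (f + g + h)) * (Dx * Dy) +
      ι (a02 - g) * (Dy * Dy) +
      ι (a10 - (dy f + h * f + dx h + g * h)) * Dx +
      ι (a01 - (dx f + g * f + dx h + g * h)) * Dy +
      ι (a00 - (dx (dy f) + h * dx f + g * dy f + (dx h + g * h) * f)) = 0 := by
    have hL2 : Dx * Dx * Dy + Dx * (Dy * Dy) + ι a20 * (Dx * Dx) +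
        ι a11 * (Dx * Dy) + ι a02 * (Dy * Dy) + ι a10 * Dx + ι a01 * Dy + ι a00 =
        (Dx + ι g) * (Dy + ι h) * (Dx + Dy + ι f) := by
      rw [← hL]
      simp only [mul_add, mul_assoc, hDD'']
    have e : ι (0 : K) * (Dx * Dx * Dx) + ι (0 : K) * (Dx * Dx * Dy) +
        ι (0 : K) * (Dx * (Dy * Dy)) + ι (0 : K) * (Dy * Dy * Dy) +
        ι (a20 - h) * (Dx * Dx) + ι (a11 - (f + g + h)) * (Dx * Dy) +
        ι (a02 - g) * (Dy * Dy) +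
        ι (a10 - (dy f + h * f + dx h + g * h)) * Dx +
        ι (a01 - (dx f + g * f + dx h + g * h)) * Dy +
        ι (a00 - (dx (dy f) + h * dx f + g * dy f + (dx h + g * h) * f)) =
        (Dx * Dx * Dy + Dx * (Dy * Dy) + ι a20 * (Dx * Dx) + ι a11 * (Dx * Dy) +
          ι a02 * (Dy * Dy) + ι a10 * Dx + ι a01 * Dy + ι a00) -
        (Dx * Dx * Dy + Dx * (Dy * Dy) + ι h * (Dx * Dx) +
          (ι f + ι g + ι h) * (Dx * Dy) + ι g * (Dy * Dy) +
          (ι (dy f) + ι h * ι f + ι (dx h) + ι g * ι h) * Dx +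
          (ι (dx f) + ι g * ι f + ι (dx h) + ι g * ι h) * Dy +
          (ι (dx (dy f)) + ι h * ι (dx f) + ι g * ι (dy f) +
            (ι (dx h) + ι g * ι h) * ι f)) := by
      simp only [map_sub, map_add, map_mul, map_zero, zero_mul, sub_mul, add_mul, mul_add]
      noncomm_ring
    rw [e, hL2, key, sub_self]
  obtain ⟨-, -, -, -, h20, h11, h02, -, -, -⟩ :=
    hind 0 0 0 0 (a20 - h) (a11 - (f + g + h)) (a02 - g)
      (a10 - (dy f + h * f + dx h + g * h))
      (a01 - (dx f + g * f + dx h + g * h))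
      (a00 - (dx (dy f) + h * dx f + g * dy f + (dx h + g * h) * f)) main
  exact ⟨by linear_combination -h20, by linear_combination -h02, by
    linear_combination -h11 + h02 + h20⟩
end
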